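/- Let A be a Noetherian commutative ring and I ⊆ A an ideal. Then the I-adic completion Â = lim_n A/Iⁿ is I·Â-adically complete; equivalently, Â, viewed as an A-module, is IsAdicComplete with respect to I. -/

import Mathlib

/-- For a Noetherian commutative ring `A` and an ideal `I`, the `I`-adic completion of `A`
is `I`-adically complete. -/
theorem adicCompletion_isAdicComplete (A : Type*) [CommRing A] [IsNoetherianRing A]
    (I : Ideal A) :
    IsAdicComplete I (AdicCompletion I A) :=
  AdicCompletion.isAdicComplete I.fg_of_isNoetherianRing
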